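/- (Values of ℓ and ℓ^sd in type A_n.) Let n ≥ 1. (a) The minimum of ℓ_{ϖ_j}⁻(ϖ_k) over all j, k ∈ {1, …, n} equals 1, and it is attained for j = k = 1 by the single simple reflection s₁. (b) The minimum of ℓ_h⁻(λ), taken over all nonzero h ∈ ℝ^{n+1} with weakly decreasing coordinates satisfying h_i = −h_{n+2−i} for all i, and over all λ ∈ ℝ^{n+1} with weakly decreasing coordinates and λ₁ > λ_{n+1}, equals ⌊(n+2)/2⌋. -/

import Mathlib

/-!
Write `w λ = λ ∘ σ` for the permutation `σ` of coordinates realised by `w`; coordinates are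
indexed from `0`.

(a) Since `∑ᵢ (ϖ_a)ᵢ = 0`, the product `⟨ϖ_a, ϖ_b⟩` is the sum of the first `b` coordinates of the
antitone vector `ϖ_a`, hence nonnegative; and `⟨s₁ ϖ₁, ϖ₁⟩ = (ϖ₁)₁ = -1/(n+1)`.

(b) By Abel summation against the dominant `λ`, it suffices that `∑_{i ∈ S} hᵢ ≥ 0` for every
`S = σ⁻¹ {0, …, t-1}`. A simple reflection raises `∑_{i ∈ S} i` by at most one, so listing
`S = {q₀ < ⋯ < q_{c-1}}` gives `∑ⱼ (qⱼ - j) ≤ k`. The excesses `qⱼ - j` are nondecreasing, and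
then `2k ≤ n` forces `qⱼ + q_{c-1-j} ≤ n`; pairing `qⱼ` with `q_{c-1-j}` and using
`h_{n-i} = -hᵢ` makes the sum nonnegative. Conversely `s_m ⋯ s₁` with `m = ⌊(n+2)/2⌋` moves the
first coordinate to position `m`, so `⟨s_m ⋯ s₁ ϖ₁, 2ρ⟩ = (2ρ)_m = n - 2m < 0` for
`2ρ = (n, n-2, …, -n)`.
-/

open scoped RealInnerProductSpace

/-- The `j`-th simple reflection of type `Aₙ` (`1 ≤ j ≤ n`), acting on `ℝ^{n+1}`:
it transposes the coordinates numbered `j` and `j+1` (in `1`-based numbering). -/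
noncomputable def sA (n j : ℕ) :
    EuclideanSpace ℝ (Fin (n + 1)) → EuclideanSpace ℝ (Fin (n + 1)) :=
  fun v => WithLp.toLp 2 fun i =>
    v ⟨(if (i : ℕ) + 1 = j then j else if (i : ℕ) = j then j - 1 else (i : ℕ)) % (n + 1),
      Nat.mod_lt _ (Nat.succ_pos n)⟩

/-- The composition of the simple reflections indexed by the entries of `l`
(the last entry of the list is applied first). -/
noncomputable def compA (n : ℕ) (l : List ℕ) :
    EuclideanSpace ℝ (Fin (n + 1)) → EuclideanSpace ℝ (Fin (n + 1)) :=
  l.foldr (fun j g => sA n j ∘ g) id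

/-- The fundamental weight `ϖⱼ = e₁ + ⋯ + eⱼ − (j/(n+1))·ε` of type `Aₙ` (`1 ≤ j ≤ n`). -/
noncomputable def wtA (n j : ℕ) : EuclideanSpace ℝ (Fin (n + 1)) :=
  WithLp.toLp 2 fun i => (if (i : ℕ) < j then 1 else 0) - (j : ℝ) / ((n : ℝ) + 1)

open Finset

def adjSwap (n j : ℕ) : Equiv.Perm (Fin (n + 1)) :=
  Equiv.swap (Fin.ofNat (n + 1) (j - 1)) (Fin.ofNat (n + 1) j)

def permA (n : ℕ) (l : List ℕ) : Equiv.Perm (Fin (n + 1)) :=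
  l.foldr (fun j σ => σ * adjSwap n j) 1

lemma Fin.val_ofNat_of_le {n m : ℕ} (hm : m ≤ n) : (Fin.ofNat (n + 1) m : ℕ) = m :=
  Nat.mod_eq_of_lt (by omega)

lemma Fin.mk_sub_eq_rev {n : ℕ} (i : Fin (n + 1)) (h : n - (i : ℕ) < n + 1) :
    (⟨n - i, h⟩ : Fin (n + 1)) = i.rev :=
  Fin.ext (by simp only [Fin.val_rev]; omega)

lemma sA_apply {n j : ℕ} (hj : 1 ≤ j ∧ j ≤ n) (v : EuclideanSpace ℝ (Fin (n + 1)))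
    (i : Fin (n + 1)) : sA n j v i = v (adjSwap n j i) := by
  have h1 := Fin.val_ofNat_of_le (n := n) (m := j - 1) (by omega)
  have h2 := Fin.val_ofNat_of_le hj.2
  have hi := i.isLt
  refine congrArg v (Fin.ext ?_)
  rw [Fin.val_mk, Nat.mod_eq_of_lt (by split_ifs <;> omega), adjSwap, Equiv.swap_apply_def]
  split_ifs <;> simp only [Fin.ext_iff, h1, h2] at * <;> omega

lemma compA_apply {n : ℕ} {l : List ℕ} (hl : ∀ m ∈ l, 1 ≤ m ∧ m ≤ n)
    (v : EuclideanSpace ℝ (Fin (n + 1))) (i : Fin (n + 1)) :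
    compA n l v i = v (permA n l i) := by
  induction l generalizing i with
  | nil => rfl
  | cons j l ih =>
    rw [List.forall_mem_cons] at hl
    exact (sA_apply hl.1 _ i).trans (ih hl.2 _)

lemma inner_compA {n : ℕ} {l : List ℕ} (hl : ∀ m ∈ l, 1 ≤ m ∧ m ≤ n)
    (v w : EuclideanSpace ℝ (Fin (n + 1))) :
    ⟪compA n l v, w⟫ = ∑ i, v i * w ((permA n l).symm i) := by
  simp only [PiLp.inner_apply, RCLike.inner_apply, conj_trivial, compA_apply hl]
  rw [← Equiv.sum_comp (permA n l) (fun i => v i * w ((permA n l).symm i))]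
  simp [mul_comm]

lemma Fin.sum_eq_zero_of_rev {n : ℕ} {h : Fin n → ℝ} (hsymm : ∀ i, h i.rev = -h i) :
    ∑ i, h i = 0 := by
  have := Equiv.sum_comp Fin.revPerm h
  simp only [Fin.revPerm_apply, hsymm, sum_neg_distrib] at this
  linarith

lemma le_sum_mul_of_antitone {N : ℕ} {a g : Fin (N + 1) → ℝ} (ha : Antitone a)
    (hg : ∀ t : ℕ, 0 ≤ ∑ i with (i : Fin _).val < t, g i) :
    a (Fin.last N) * ∑ i, g i ≤ ∑ i, a i * g i := by
  induction N with
  | zero => simp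
  | succ N ih =>
    have hpart : ∀ t : ℕ, 0 ≤ ∑ i : Fin (N + 1) with i.val < t, g (Fin.castSucc i) := by
      intro t
      have := hg (min t (N + 1))
      rw [sum_filter, Fin.sum_univ_castSucc] at this
      simpa [sum_filter, Fin.is_le] using this
    have hrest := ih (ha.comp_monotone Fin.strictMono_castSucc.monotone) hpart
    have hlast : a (Fin.last (N + 1)) ≤ a (Fin.castSucc (Fin.last N)) := ha (Fin.le_last _)
    have hnonneg : 0 ≤ ∑ i : Fin (N + 1), g (Fin.castSucc i) := by
      simpa [Fin.is_le] using hpart (N + 1)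
    rw [Fin.sum_univ_castSucc, Fin.sum_univ_castSucc (fun i => a i * g i)]
    simp only [Function.comp_apply] at hrest
    nlinarith

lemma sum_mul_nonneg_of_antitone {N : ℕ} {a g : Fin N → ℝ} (ha : Antitone a)
    (hsum : ∑ i, g i = 0) (hg : ∀ t : ℕ, 0 ≤ ∑ i with (i : Fin _).val < t, g i) :
    0 ≤ ∑ i, a i * g i := by
  cases N with
  | zero => simp
  | succ N => simpa [hsum] using le_sum_mul_of_antitone ha hg

lemma Fin.val_swap_le {N : ℕ} {a b : Fin N} (hab : (b : ℕ) = a + 1) (i : Fin N) :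
    (Equiv.swap a b i : ℕ) ≤ i + if i = a then 1 else 0 := by
  rw [Equiv.swap_apply_def]
  split_ifs with h1 h2 <;> simp only [Fin.ext_iff] at * <;> omega

lemma sum_val_filter_mul_swap_le {N : ℕ} (σ : Equiv.Perm (Fin N)) {a b : Fin N}
    (hab : (b : ℕ) = a + 1) (t : ℕ) :
    ∑ i with ((σ * Equiv.swap a b) i : ℕ) < t, (i : ℕ) ≤
      ∑ i with (σ i : ℕ) < t, (i : ℕ) + 1 := by
  have hreindex : ∑ i with ((σ * Equiv.swap a b) i : ℕ) < t, (i : ℕ) =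
      ∑ i with (σ i : ℕ) < t, (Equiv.swap a b i : ℕ) := by
    simp only [sum_filter]
    rw [← Equiv.sum_comp (Equiv.swap a b)]
    simp
  calc ∑ i with ((σ * Equiv.swap a b) i : ℕ) < t, (i : ℕ)
      ≤ ∑ i with (σ i : ℕ) < t, ((i : ℕ) + if i = a then 1 else 0) :=
        hreindex ▸ sum_le_sum fun i _ => Fin.val_swap_le hab i
    _ ≤ ∑ i with (σ i : ℕ) < t, (i : ℕ) + 1 := by
        rw [sum_add_distrib, sum_ite_eq']
        split_ifs <;> simp

lemma Fin.card_filter_perm_val_lt {N : ℕ} (σ : Equiv.Perm (Fin N)) (t : ℕ) :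
    #{i | (σ i : ℕ) < t} = min N t := by
  rw [← Fin.card_filter_val_lt]
  exact card_equiv σ (by simp)

lemma Fin.sum_val_filter_val_lt (N t : ℕ) :
    ∑ i : Fin N with i.val < t, (i : ℕ) = ∑ i ∈ range (min N t), i := by
  have hrange : (range N).filter (· < t) = range (min N t) := by
    ext; simp
  rw [sum_filter, Fin.sum_univ_eq_sum_range (fun i => if i < t then i else 0), ← sum_filter,
    hrange]

lemma sum_val_filter_permA_le {n : ℕ} {l : List ℕ} (hl : ∀ m ∈ l, 1 ≤ m ∧ m ≤ n)
    (t : ℕ) : ∑ i with (permA n l i : ℕ) < t, (i : ℕ) ≤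
      ∑ i ∈ range (min (n + 1) t), i + l.length := by
  induction l with
  | nil => exact (Fin.sum_val_filter_val_lt (n + 1) t).le
  | cons j l ih =>
    rw [List.forall_mem_cons] at hl
    have h1 := Fin.val_ofNat_of_le (n := n) (m := j - 1) (by omega)
    have h2 := Fin.val_ofNat_of_le hl.1.2
    calc ∑ i with ((permA n l * adjSwap n j) i : ℕ) < t, (i : ℕ)
        ≤ ∑ i with (permA n l i : ℕ) < t, (i : ℕ) + 1 :=
          sum_val_filter_mul_swap_le _ (by omega) t
      _ ≤ _ := by simp only [List.length_cons]; linarith [ih hl.2]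

lemma StrictMono.apply_add_sub_le {c : ℕ} {q : Fin c → ℕ} (hq : StrictMono q) {i i' : Fin c}
    (hii' : i ≤ i') : q i + (i' - i) ≤ q i' := by
  obtain ⟨d, hd⟩ : ∃ d, (i' : ℕ) = i + d := ⟨i' - i, by omega⟩
  induction d generalizing i' with
  | zero => simp [Fin.ext (by omega : (i' : ℕ) = i)]
  | succ d ih =>
    have hprev := ih (i' := ⟨i + d, by omega⟩) (by simp [Fin.le_def]) rfl
    have hstep := hq (show (⟨i + d, by omega⟩ : Fin c) < i' by simp [Fin.lt_def]; omega)
    simp only at hprev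
    omega

lemma StrictMono.val_le_apply {c : ℕ} {q : Fin c → ℕ} (hq : StrictMono q) (i : Fin c) :
    (i : ℕ) ≤ q i := by
  have := hq.apply_add_sub_le (show (⟨0, i.pos⟩ : Fin c) ≤ i by simp [Fin.le_def])
  simp only at this
  omega

/-- The excess `q i - i` is monotone: at least `u` from `j` on and `u + w` from `j'` on. -/
lemma StrictMono.sum_add_excess_le {c : ℕ} {q : Fin c → ℕ} (hq : StrictMono q) {j j' : Fin c}
    (hjj' : j ≤ j') {u w : ℕ} (hu : q j = j + u) (hw : q j' = j' + u + w) :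
    ∑ i : Fin c, (i : ℕ) + (u * (c - j) + w * (c - j')) ≤ ∑ i, q i := by
  have hpoint : ∀ i : Fin c,
      (i : ℕ) + ((if j ≤ i then u else 0) + (if j' ≤ i then w else 0)) ≤ q i := by
    intro i
    by_cases h1 : j' ≤ i
    · have := hq.apply_add_sub_le h1
      simp only [hjj'.trans h1, h1, if_true]
      omega
    · by_cases h2 : j ≤ i
      · have := hq.apply_add_sub_le h2
        simp only [h1, h2, if_true, if_false]
        omega
      · simpa [h1, h2] using hq.val_le_apply i
  have := sum_le_sum fun i (_ : i ∈ univ) => hpoint i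
  simpa only [sum_add_distrib, sum_ite, sum_const_zero, sum_const, smul_eq_mul, add_zero,
    filter_le_eq_Ici, Fin.card_Ici, mul_comm] using this

lemma StrictMono.add_rev_le {c n k : ℕ} {q : Fin c → ℕ} (hq : StrictMono q)
    (hqn : ∀ j, q j ≤ n) (hk : 2 * k ≤ n) (hsum : ∑ j, q j ≤ ∑ j : Fin c, (j : ℕ) + k)
    (j : Fin c) : q j + q j.rev ≤ n := by
  wlog hj : j ≤ j.rev generalizing j
  · have := this j.rev (by rw [Fin.rev_rev]; exact (not_le.mp hj).le)
    rwa [Fin.rev_rev, add_comm] at this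
  have hrev : (j.rev : ℕ) = c - 1 - j := by rw [Fin.val_rev]; omega
  obtain ⟨u, hu⟩ : ∃ u, q j = j + u := ⟨q j - j, by have := hq.val_le_apply j; omega⟩
  obtain ⟨w, hw⟩ : ∃ w, q j.rev = j.rev + u + w :=
    ⟨q j.rev - j.rev - u, by have := hq.apply_add_sub_le hj; omega⟩
  have hcount : u * (j.rev + 1) + w * (j + 1) ≤ k := by
    have := hq.sum_add_excess_le hj hu hw
    rw [show c - (j : ℕ) = j.rev + 1 by omega, show c - (j.rev : ℕ) = j + 1 by omega] at this
    linarith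
  have hlast : q j.rev + j ≤ n := by
    have := hq.apply_add_sub_le (show j.rev ≤ ⟨c - 1, by omega⟩ by simp [Fin.le_def]; omega)
    have := hqn ⟨c - 1, by omega⟩
    simp only at *
    omega
  rcases Nat.eq_zero_or_pos u with hu0 | hu0
  · omega
  · -- with `J = j.rev ≥ j`: `j + J + 2u + w ≤ 2 (u (J + 1) + w (j + 1)) ≤ 2k` once `u ≥ 1`
    have hJ : (j.rev : ℕ) ≤ u * j.rev := Nat.le_mul_of_pos_left _ hu0
    have hj' : (j : ℕ) ≤ j.rev := hj
    rw [hu, hw]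
    nlinarith

lemma sum_nonneg_of_sum_val_le {n k : ℕ} {h : Fin (n + 1) → ℝ} (hh : Antitone h)
    (hsymm : ∀ i, h i.rev = -h i) (hk : 2 * k ≤ n) (S : Finset (Fin (n + 1)))
    (hS : ∑ i ∈ S, (i : ℕ) ≤ ∑ i ∈ range #S, i + k) : 0 ≤ ∑ i ∈ S, h i := by
  set e := S.orderIsoOfFin rfl
  have hreindex {M : Type} [AddCommMonoid M] (f : Fin (n + 1) → M) :
      ∑ i ∈ S, f i = ∑ j, f (e j) := by
    rw [← sum_coe_sort, ← Equiv.sum_comp e.toEquiv]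
    rfl
  have hq : StrictMono fun j => ((e j : Fin (n + 1)) : ℕ) := fun a b hab => e.strictMono hab
  have hpair := hq.add_rev_le (fun j => Fin.is_le _) hk (by
    rw [← hreindex (fun i => (i : ℕ)), Fin.sum_univ_eq_sum_range (fun i => i)]
    exact hS)
  have hpairs : ∀ j, 0 ≤ h (e j) + h (e j.rev) := fun j => by
    have hle : (e j : Fin (n + 1)) ≤ (e j.rev : Fin (n + 1)).rev := by
      rw [Fin.le_def, Fin.val_rev]
      have := hpair j
      omega
    have := hh hle
    rw [hsymm] at this
    linarith
  have hrev := Equiv.sum_comp Fin.revPerm fun j => h (e j)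
  have htotal := sum_nonneg fun j (_ : j ∈ univ) => hpairs j
  rw [sum_add_distrib] at htotal
  simp only [Fin.revPerm_apply] at hrev
  rw [hreindex]
  linarith

lemma sum_filter_permA_nonneg {n : ℕ} {l : List ℕ} (hl : ∀ m ∈ l, 1 ≤ m ∧ m ≤ n)
    (hk : 2 * l.length ≤ n) {h : Fin (n + 1) → ℝ} (hh : Antitone h)
    (hsymm : ∀ i, h i.rev = -h i) (t : ℕ) : 0 ≤ ∑ i with (permA n l i : ℕ) < t, h i :=
  sum_nonneg_of_sum_val_le hh hsymm hk _
    (by rw [Fin.card_filter_perm_val_lt]; exact sum_val_filter_permA_le hl t)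

theorem inner_compA_nonneg {n : ℕ} {l : List ℕ} (hl : ∀ m ∈ l, 1 ≤ m ∧ m ≤ n)
    (hk : 2 * l.length ≤ n) {lam h : EuclideanSpace ℝ (Fin (n + 1))} (hlam : Antitone lam)
    (hh : Antitone h) (hsymm : ∀ i, h i.rev = -h i) : 0 ≤ ⟪compA n l lam, h⟫ := by
  rw [inner_compA hl]
  refine sum_mul_nonneg_of_antitone hlam ?_ fun t => ?_
  · rw [Equiv.sum_comp]
    exact Fin.sum_eq_zero_of_rev hsymm
  · have hreindex : ∑ i with i.val < t, h ((permA n l).symm i) =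
        ∑ i with (permA n l i : ℕ) < t, h i := by
      simp only [sum_filter]
      rw [← Equiv.sum_comp (permA n l)]
      simp
    rw [hreindex]
    exact sum_filter_permA_nonneg hl hk hh hsymm t

lemma sum_filter_val_lt_nonneg_of_antitone {N : ℕ} {g : Fin N → ℝ} (hg : Antitone g)
    (hsum : ∑ i, g i = 0) (t : ℕ) : 0 ≤ ∑ i with i.val < t, g i := by
  by_cases hpos : ∀ i : Fin N, i.val < t → 0 ≤ g i
  · exact sum_nonneg fun i hi => hpos i (mem_filter.mp hi).2
  push Not at hpos
  obtain ⟨i₀, hi₀, hneg⟩ := hpos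
  have htail : ∑ i with ¬ i.val < t, g i ≤ 0 := sum_nonpos fun i hi =>
    (hg (show i₀ ≤ i by rw [mem_filter] at hi; rw [Fin.le_def]; omega)).trans hneg.le
  linarith [sum_filter_add_sum_filter_not univ (fun i : Fin N => i.val < t) g]

lemma wtA_antitone (n a : ℕ) : Antitone (wtA n a) := fun i i' hii' => by
  simp only [wtA, PiLp.toLp_apply]
  have : (i : ℕ) ≤ i' := hii'
  split_ifs <;> first | omega | linarith

lemma sum_wtA {n a : ℕ} (ha : a ≤ n + 1) : ∑ i, wtA n a i = 0 := by
  simp only [wtA, PiLp.toLp_apply, sum_sub_distrib, sum_boole, Fin.card_filter_val_lt,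
    min_eq_right ha, sum_const, card_univ, Fintype.card_fin, nsmul_eq_mul]
  push_cast
  field_simp
  ring

lemma sum_wtA_mul (n a : ℕ) {w : Fin (n + 1) → ℝ} (hw : ∑ i, w i = 0) :
    ∑ i, wtA n a i * w i = ∑ i with i.val < a, w i := by
  simp only [wtA, PiLp.toLp_apply, sub_mul, sum_sub_distrib, ← mul_sum, hw, mul_zero, sub_zero,
    ite_mul, one_mul, zero_mul, sum_filter]

lemma inner_wtA_nonneg {n a : ℕ} (ha : a ≤ n + 1) (b : ℕ) : 0 ≤ ⟪wtA n a, wtA n b⟫ := by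
  simp only [PiLp.inner_apply, RCLike.inner_apply, conj_trivial]
  rw [sum_wtA_mul n b (sum_wtA ha)]
  exact sum_filter_val_lt_nonneg_of_antitone (wtA_antitone n a) (sum_wtA ha) b

def descList : ℕ → List ℕ
  | 0 => []
  | m + 1 => (m + 1) :: descList m

lemma length_descList (m : ℕ) : (descList m).length = m := by
  induction m with
  | zero => rfl
  | succ m ih => simp [descList, ih]

lemma mem_descList {m j : ℕ} (hj : j ∈ descList m) : 1 ≤ j ∧ j ≤ m := by
  induction m with
  | zero => simp [descList] at hj
  | succ m ih =>
    rcases List.mem_cons.mp hj with rfl | hj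
    · omega
    · have := ih hj
      omega

lemma permA_descList (n m : ℕ) : permA n (descList m) (Fin.ofNat (n + 1) m) = 0 := by
  induction m with
  | zero => rfl
  | succ m ih =>
    change permA n (descList m) (adjSwap n (m + 1) (Fin.ofNat (n + 1) (m + 1))) = 0
    rw [adjSwap, Nat.add_sub_cancel, Equiv.swap_apply_right, ih]

lemma inner_compA_descList_wtA_one {n m : ℕ} (hm : m ≤ n) (w : EuclideanSpace ℝ (Fin (n + 1)))
    (hw : ∑ i, w i = 0) :
    ⟪compA n (descList m) (wtA n 1), w⟫ = w (Fin.ofNat (n + 1) m) := by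
  have hl : ∀ j ∈ descList m, 1 ≤ j ∧ j ≤ n := fun j hj =>
    (mem_descList hj).imp_right (·.trans hm)
  have hfirst : ({i | i.val < 1} : Finset (Fin (n + 1))) = {0} := by
    ext i
    simp only [mem_filter, mem_univ, true_and, mem_singleton, Fin.ext_iff, Fin.val_zero,
      Nat.lt_one_iff]
  rw [inner_compA hl, sum_wtA_mul n 1 (by rwa [Equiv.sum_comp]), hfirst, sum_singleton]
  rw [(Equiv.symm_apply_eq _).mpr (permA_descList n m).symm]

noncomputable def twoRho (n : ℕ) : EuclideanSpace ℝ (Fin (n + 1)) :=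
  WithLp.toLp 2 fun i => (n : ℝ) - 2 * i

lemma twoRho_antitone (n : ℕ) : Antitone (twoRho n) := fun i i' hii' => by
  have : (i : ℝ) ≤ i' := by exact_mod_cast hii'
  simp only [twoRho, PiLp.toLp_apply]
  linarith

lemma twoRho_rev (n : ℕ) (i : Fin (n + 1)) : twoRho n i.rev = -twoRho n i := by
  simp only [twoRho, PiLp.toLp_apply, Fin.val_rev]
  rw [Nat.cast_sub (by omega)]
  push_cast
  ring

lemma twoRho_ne_zero {n : ℕ} (hn : 1 ≤ n) : twoRho n ≠ 0 := fun h0 => by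
  have := congrArg (fun v : EuclideanSpace ℝ (Fin (n + 1)) => v 0) h0
  simp only [twoRho, PiLp.toLp_apply, Fin.val_zero, Nat.cast_zero, mul_zero, sub_zero,
    PiLp.zero_apply] at this
  exact (by omega : n ≠ 0) (by exact_mod_cast this)

lemma wtA_one_last_lt {n : ℕ} (hn : 1 ≤ n) :
    wtA n 1 (Fin.last n) < wtA n 1 ⟨0, n.succ_pos⟩ := by
  simp only [wtA, PiLp.toLp_apply, Fin.val_last]
  rw [if_neg (by omega), if_pos (by omega)]
  linarith

lemma inner_compA_one_wtA_one_neg {n : ℕ} (hn : 1 ≤ n) :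
    ⟪compA n [1] (wtA n 1), wtA n 1⟫ < 0 := by
  rw [show [1] = descList 1 from rfl, inner_compA_descList_wtA_one hn _ (sum_wtA (by omega))]
  simp only [wtA, PiLp.toLp_apply, Fin.val_ofNat_of_le hn, lt_self_iff_false, if_false]
  have : (0 : ℝ) < 1 / ((n : ℝ) + 1) := by positivity
  linarith

lemma inner_compA_descList_twoRho_neg {n : ℕ} (hn : 1 ≤ n) :
    ⟪compA n (descList ((n + 2) / 2)) (wtA n 1), twoRho n⟫ < 0 := by
  rw [inner_compA_descList_wtA_one (by omega) _ (Fin.sum_eq_zero_of_rev (twoRho_rev n))]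
  simp only [twoRho, PiLp.toLp_apply, Fin.val_ofNat_of_le (by omega : (n + 2) / 2 ≤ n)]
  have : (n : ℝ) < 2 * ((n + 2) / 2 : ℕ) := by
    exact_mod_cast (by omega : n < 2 * ((n + 2) / 2))
  linarith

theorem statement6 (n : ℕ) (hn : 1 ≤ n) :
    (IsLeast {k : ℕ | ∃ j kk, 1 ≤ j ∧ j ≤ n ∧ 1 ≤ kk ∧ kk ≤ n ∧
        ∃ l : List ℕ, (∀ m ∈ l, 1 ≤ m ∧ m ≤ n) ∧ l.length = k ∧
          ⟪compA n l (wtA n kk), wtA n j⟫ < 0} 1 ∧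
      ⟪compA n [1] (wtA n 1), wtA n 1⟫ < 0) ∧
    IsLeast {k : ℕ | ∃ h lam : EuclideanSpace ℝ (Fin (n + 1)),
        h ≠ 0 ∧ (∀ i j : Fin (n + 1), i ≤ j → h j ≤ h i) ∧
        (∀ i : Fin (n + 1), h i = - h ⟨n - (i : ℕ), by omega⟩) ∧
        (∀ i j : Fin (n + 1), i ≤ j → lam j ≤ lam i) ∧
        lam ⟨n, by omega⟩ < lam ⟨0, by omega⟩ ∧
        ∃ l : List ℕ, (∀ m ∈ l, 1 ≤ m ∧ m ≤ n) ∧ l.length = k ∧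
          ⟪compA n l lam, h⟫ < 0} ((n + 2) / 2) := by
  have hs₁ := inner_compA_one_wtA_one_neg hn
  refine ⟨⟨⟨⟨1, 1, le_rfl, hn, le_rfl, hn, [1], by simpa using hn, rfl, hs₁⟩, ?_⟩, hs₁⟩,
    ?_, ?_⟩
  · rintro k ⟨j, kk, -, -, -, hkk, l, -, rfl, hneg⟩
    cases l with
    | nil => exact absurd hneg (inner_wtA_nonneg (by omega) j).not_gt
    | cons => simp
  · refine ⟨twoRho n, wtA n 1, twoRho_ne_zero hn, fun i j hij => twoRho_antitone n hij,
      fun i => by rw [Fin.mk_sub_eq_rev, twoRho_rev, neg_neg], fun i j hij => wtA_antitone n 1 hij,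
      wtA_one_last_lt hn, descList ((n + 2) / 2),
      fun j hj => (mem_descList hj).imp_right (·.trans (by omega)), length_descList _,
      inner_compA_descList_twoRho_neg hn⟩
  · rintro k ⟨h, lam, -, hh, hsymm, hlam, -, l, hl, rfl, hneg⟩
    by_contra hk
    refine hneg.not_ge (inner_compA_nonneg hl (by omega) (fun i j hij => hlam i j hij)
      (fun i j hij => hh i j hij) fun i => ?_)
    have := hsymm i
    rw [Fin.mk_sub_eq_rev] at this
    linarith
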